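/- Let G be bipartite with perfect matching M. If some set L of non-edges makes G + L robust, then there exists a set L' of non-edges with |L'| ≤ |L| such that G + L' is robust and every edge of L' corresponds to an arc from a sink component to a source component of the condensation of D(G, M). -/

import Mathlib

open SimpleGraph

variable {V : Type*}

/-- Two edges alternate with respect to the edge set `S`. -/
def altRel (S : Set (Sym2 V)) (e f : Sym2 V) : Prop := e ∈ S ↔ f ∉ S

/-- `c` is an `S`-alternating cycle: a cycle whose edges alternate between `S` and its
complement (including the wrap-around pair). -/
def IsAltCycle (G : SimpleGraph V) (S : Set (Sym2 V)) {v : V} (c : G.Walk v v) : Prop :=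
  c.IsCycle ∧ List.Chain' (altRel S) c.edges ∧
    ∀ e f, c.edges.head? = some e → c.edges.getLast? = some f → altRel S f e

/-- `G` admits a perfect matching. -/
def HasPM (G : SimpleGraph V) : Prop := ∃ M : G.Subgraph, M.IsPerfectMatching

/-- `G` admits a perfect matching after the deletion of any single edge. -/
def Robust (G : SimpleGraph V) : Prop := ∀ e ∈ G.edgeSet, HasPM (G.deleteEdges {e})

/-- `(U, W)` is a bipartition of `G`. -/
def IsBipartitionOf (G : SimpleGraph V) (U W : Set V) : Prop :=
  (∀ v, v ∈ U ↔ v ∉ W) ∧ ∀ ⦃a b⦄, G.Adj a b → (a ∈ U ↔ b ∈ W)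

/-- `M` is (the edge set of) a perfect matching of `G`. -/
def IsPMSet (G : SimpleGraph V) (M : Set (Sym2 V)) : Prop :=
  M ⊆ G.edgeSet ∧ ∀ v : V, ∃! e, e ∈ M ∧ v ∈ e

/-- The arcs of the auxiliary digraph `D(G, M)` on `U`. -/
def auxArc (G : SimpleGraph V) (M : Set (Sym2 V)) (U W : Set V) (u u' : V) : Prop :=
  u ∈ U ∧ u' ∈ U ∧ ∃ w ∈ W, s(u, w) ∈ M ∧ s(w, u') ∈ G.edgeSet ∧ s(w, u') ∉ M

/-- `e` is a non-edge of the bipartite graph `G` (an edge of its bipartite complement). -/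
def IsNonEdge (G : SimpleGraph V) (U W : Set V) (e : Sym2 V) : Prop :=
  ∃ u ∈ U, ∃ w ∈ W, e = s(u, w) ∧ ¬ G.Adj u w

/-- `x` and `y` are in the same strongly connected component of `r`. -/
def MutualReach (r : V → V → Prop) (x y : V) : Prop :=
  Relation.ReflTransGen r x y ∧ Relation.ReflTransGen r y x

/-- The strongly connected component of `u` is a sink of the condensation of `r`. -/
def InSinkComp (r : V → V → Prop) (u : V) : Prop :=
  ∀ x y, MutualReach r x u → r x y → MutualReach r y u

/-- The strongly connected component of `u` is a source of the condensation of `r`. -/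
def InSourceComp (r : V → V → Prop) (u : V) : Prop :=
  ∀ x y, MutualReach r x u → r y x → MutualReach r y u

/-!
Let `H` be bipartite with perfect matching `M`. A perfect matching `N` of `H` avoiding the
matching edge at `u ∈ U` gives the permutation `v ↦ N (M v)` of `U`, which moves `u` and
sends each vertex it moves along an arc of `D(H, M)`; so `u` lies on a cycle of `D(H, M)`.
Conversely, shifting `M` along such a cycle produces a perfect matching avoiding that edge.
Hence `H` is robust iff every vertex of `U` lies on a closed walk of `D(H, M)`.

Adding a non-edge `s(u', w)` to `G` adds the arc `mate w → u'`. Replace it by an arc from a sink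
`s` reachable from `mate w` to a source `t` reaching `u'` (the non-edge `s(t, mate s)`), or by
nothing if `s` already reaches `t`. Every arc of `D(G + L, M)` then becomes a walk of
`D(G + L', M)`, so closed walks, and with them robustness, survive.
-/

open Relation Function Equiv

section Digraph

variable {r : V → V → Prop}

theorem exists_reflTransGen_inSinkComp [Finite V] (r : V → V → Prop) (u : V) :
    ∃ s, ReflTransGen r u s ∧ InSinkComp r s := by
  obtain ⟨s, hus, hmin⟩ := (Set.toFinite {v | ReflTransGen r u v}).exists_minimalFor
    (fun v => {z | ReflTransGen r v z}) _ ⟨u, .refl⟩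
  have hback : ∀ y, ReflTransGen r s y → ReflTransGen r y s := fun y hsy =>
    hmin (hus.trans hsy) (fun _ hyz => hsy.trans hyz) ReflTransGen.refl
  refine ⟨s, hus, fun x y hxs hxy => ?_⟩
  have hsy := hxs.2.tail hxy
  exact ⟨hback y hsy, hsy⟩

theorem mutualReach_swap {x y : V} : MutualReach (swap r) x y ↔ MutualReach r x y := by
  simp only [MutualReach, reflTransGen_swap, and_comm]

theorem exists_reflTransGen_inSourceComp [Finite V] (r : V → V → Prop) (u : V) :
    ∃ s, ReflTransGen r s u ∧ InSourceComp r s := by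
  obtain ⟨s, hus, hs⟩ := exists_reflTransGen_inSinkComp (swap r) u
  exact ⟨s, reflTransGen_swap.1 hus, fun x y hxs hyx =>
    mutualReach_swap.1 (hs x y (mutualReach_swap.2 hxs) hyx)⟩

theorem transGen_self_of_perm [Finite V] {S : Set V} (σ : Perm V)
    (hσ : ∀ v ∈ S, σ v ∈ S ∧ (σ v = v ∨ r v (σ v))) {a : V} (ha : a ∈ S) (hσa : σ a ≠ a) :
    TransGen r a a := by
  have hreach : ∀ (i : ℕ) {v}, v ∈ S → (σ ^ i) v ∈ S ∧ ReflTransGen r v ((σ ^ i) v) := by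
    intro i
    induction i with
    | zero => exact fun hv => ⟨hv, .refl⟩
    | succ i ih =>
      intro v hv
      obtain ⟨hS, hr⟩ := ih hv
      rw [pow_succ', Perm.mul_apply]
      obtain ⟨hS', hfix | harc⟩ := hσ _ hS
      · exact ⟨hS', by rwa [hfix]⟩
      · exact ⟨hS', hr.tail harc⟩
  obtain ⟨i, hi⟩ := (Perm.sameCycle_apply_left.2 (Perm.SameCycle.refl σ a)).exists_nat_pow_eq
  have hback := (hreach i (hσ a ha).1).2
  rw [hi] at hback
  exact .head' ((hσ a ha).2.resolve_left hσa) hback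

theorem exists_nodup_isChain_cons_of_reflTransGen {a b : V} (h : ReflTransGen r a b) :
    ∃ l, List.IsChain r (a :: l) ∧ (a :: l).getLast (List.cons_ne_nil _ _) = b ∧
      (a :: l).Nodup := by
  induction h using ReflTransGen.head_induction_on with
  | refl => exact ⟨[], .singleton _, rfl, List.nodup_singleton _⟩
  | @head a c hac _ ih =>
    obtain ⟨l, hch, hlast, hnd⟩ := ih
    by_cases hmem : a ∈ c :: l
    · obtain ⟨p, q, hpq⟩ := List.append_of_mem hmem
      simp only [hpq] at hch hlast hnd
      exact ⟨q, hch.right_of_append, by rwa [List.getLast_append_of_ne_nil] at hlast,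
        hnd.sublist (List.sublist_append_right _ _)⟩
    · exact ⟨c :: l, .cons_cons hac hch, by rwa [List.getLast_cons_cons],
        List.nodup_cons.2 ⟨hmem, hnd⟩⟩

theorem List.rel_formPerm_apply_of_isChain [DecidableEq V] {l : List V} (hl : l ≠ [])
    (hnd : l.Nodup) (hch : l.IsChain r) (hwrap : r (l.getLast hl) (l.head hl)) {x : V}
    (hx : x ∈ l) : r x (l.formPerm x) := by
  obtain ⟨i, hi, rfl⟩ := List.getElem_of_mem hx
  rw [List.formPerm_apply_getElem _ hnd]
  by_cases hlt : i + 1 < l.length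
  · simpa only [Nat.mod_eq_of_lt hlt] using List.isChain_iff_getElem.1 hch i hlt
  · have hi' : i = l.length - 1 := by omega
    subst hi'
    simpa [Nat.sub_add_cancel (List.length_pos_iff.2 hl), List.getLast_eq_getElem,
      List.head_eq_getElem] using hwrap

theorem exists_perm_of_transGen_self (hirr : ∀ v, ¬ r v v) {a : V}
    (h : TransGen r a a) : ∃ g : Perm V, (∀ v, g v = v ∨ r v (g v)) ∧ g a ≠ a := by
  classical
  obtain ⟨c, hac, hca⟩ := TransGen.head'_iff.1 h
  obtain ⟨l, hch, hlast, hnd⟩ := exists_nodup_isChain_cons_of_reflTransGen hca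
  refine ⟨(c :: l).formPerm, fun v => ?_, ?_⟩
  · by_cases hv : v ∈ c :: l
    · exact .inr (List.rel_formPerm_apply_of_isChain (List.cons_ne_nil _ _) hnd hch
        (by rwa [hlast]) hv)
    · exact .inl (List.formPerm_apply_of_notMem hv)
  · rw [← hlast, List.formPerm_apply_getLast, hlast]
    exact fun hca => hirr a (hca ▸ hac)

end Digraph

section Matching

variable {G H : SimpleGraph V} {U W : Set V} {M : Set (Sym2 V)} {u v : V}

theorem IsBipartitionOf.mem_iff_notMem_of_adj (hbip : IsBipartitionOf H U W) {a b : V}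
    (h : H.Adj a b) : a ∈ U ↔ b ∉ U :=
  (hbip.2 h).trans (iff_not_comm.1 (hbip.1 b))

theorem IsBipartitionOf.sup_fromEdgeSet (hbip : IsBipartitionOf G U W) {L : Set (Sym2 V)}
    (hL : ∀ e ∈ L, ∃ u ∈ U, ∃ w ∈ W, e = s(u, w)) :
    IsBipartitionOf (G ⊔ SimpleGraph.fromEdgeSet L) U W := by
  refine ⟨hbip.1, fun a b hab => ?_⟩
  rcases hab with hab | ⟨hab, -⟩
  · exact hbip.2 hab
  · obtain ⟨u, hu, w, hw, heq⟩ := hL _ hab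
    rcases Sym2.eq_iff.1 heq with ⟨rfl, rfl⟩ | ⟨rfl, rfl⟩
    · exact iff_of_true hu hw
    · exact iff_of_false (fun ha => (hbip.1 a).1 ha hw) ((hbip.1 b).1 hu)

open Classical in
noncomputable def mate (M : Set (Sym2 V)) (v : V) : V :=
  if h : ∃ w, s(v, w) ∈ M then h.choose else v

theorem IsPMSet.mk_mate_mem (hM : IsPMSet H M) (v : V) : s(v, mate M v) ∈ M := by
  obtain ⟨e, ⟨he, hv⟩, -⟩ := hM.2 v
  obtain ⟨w, rfl⟩ := Sym2.mem_iff_exists.1 hv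
  have h : ∃ w, s(v, w) ∈ M := ⟨w, he⟩
  rw [mate, dif_pos h]
  exact h.choose_spec

theorem IsPMSet.eq_mate (hM : IsPMSet H M) {w : V} (h : s(v, w) ∈ M) : w = mate M v :=
  Sym2.congr_right.1 <|
    (hM.2 v).unique ⟨h, Sym2.mem_mk_left _ _⟩ ⟨hM.mk_mate_mem v, Sym2.mem_mk_left _ _⟩

theorem IsPMSet.mate_involutive (hM : IsPMSet H M) : Involutive (mate M) := fun v =>
  (hM.eq_mate (Sym2.eq_swap ▸ hM.mk_mate_mem v)).symm

theorem IsPMSet.adj_mate (hM : IsPMSet H M) (v : V) : H.Adj v (mate M v) :=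
  hM.1 (hM.mk_mate_mem v)

theorem IsPMSet.mono (hM : IsPMSet G M) (hGH : G ≤ H) : IsPMSet H M :=
  ⟨hM.1.trans (SimpleGraph.edgeSet_mono hGH), hM.2⟩

theorem IsPMSet.mate_mem_iff (hbip : IsBipartitionOf H U W) (hM : IsPMSet H M) :
    mate M v ∈ U ↔ v ∉ U :=
  iff_not_comm.1 (hbip.mem_iff_notMem_of_adj (hM.adj_mate v))

theorem IsPMSet.exists_eq_mk_mate (hbip : IsBipartitionOf H U W) (hM : IsPMSet H M)
    {e : Sym2 V} (he : e ∈ M) : ∃ u ∈ U, e = s(u, mate M u) := by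
  induction e with
  | _ x y =>
    obtain rfl := hM.eq_mate he
    by_cases hx : x ∈ U
    · exact ⟨x, hx, rfl⟩
    · exact ⟨mate M x, (hM.mate_mem_iff hbip).2 hx, by rw [hM.mate_involutive, Sym2.eq_swap]⟩

theorem hasPM_iff_exists_involutive :
    HasPM H ↔ ∃ f : V → V, Involutive f ∧ ∀ v, H.Adj v (f v) := by
  constructor
  · rintro ⟨N, hN⟩
    choose f hf huniq using SimpleGraph.Subgraph.isPerfectMatching_iff.1 hN
    exact ⟨f, fun v => (huniq (f v) v (hf v).symm).symm, fun v => N.adj_sub (hf v)⟩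
  · rintro ⟨f, hf, hadj⟩
    let N : H.Subgraph :=
      { verts := Set.univ
        Adj := fun a b => f a = b
        adj_sub := by rintro a _ rfl; exact hadj a
        edge_vert := fun _ => Set.mem_univ _
        symm := ⟨by rintro a _ rfl; exact hf a⟩ }
    exact ⟨N, SimpleGraph.Subgraph.isPerfectMatching_iff.2 fun v =>
      ⟨f v, rfl, fun _ h => Eq.symm h⟩⟩

theorem auxArc_irrefl : ¬ auxArc H M U W v v := by
  rintro ⟨-, -, w, -, hM, -, hnM⟩
  exact hnM (Sym2.eq_swap ▸ hM)

theorem auxArc_mono (hGH : G ≤ H) (h : auxArc G M U W u v) : auxArc H M U W u v := by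
  obtain ⟨hu, hv, w, hw, hM, hE, hnM⟩ := h
  exact ⟨hu, hv, w, hw, hM, SimpleGraph.edgeSet_mono hGH hE, hnM⟩

theorem reflTransGen_auxArc_mono (hGH : G ≤ H) (h : ReflTransGen (auxArc G M U W) u v) :
    ReflTransGen (auxArc H M U W) u v :=
  ReflTransGen.mono (fun _ _ => auxArc_mono hGH) _ _ h

theorem mem_iff_of_reflTransGen_auxArc (h : ReflTransGen (auxArc H M U W) u v) :
    u ∈ U ↔ v ∈ U := by
  induction h with
  | refl => rfl
  | tail _ hcv ih => exact ih.trans (iff_of_true hcv.1 hcv.2.1)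

theorem auxArc_iff (hbip : IsBipartitionOf H U W) (hM : IsPMSet H M) :
    auxArc H M U W u v ↔ u ∈ U ∧ v ∈ U ∧ u ≠ v ∧ H.Adj (mate M u) v := by
  constructor
  · rintro ⟨hu, hv, w, -, huw, hwv, hwvM⟩
    obtain rfl := hM.eq_mate huw
    refine ⟨hu, hv, ?_, hwv⟩
    rintro rfl
    exact hwvM (Sym2.eq_swap ▸ huw)
  · rintro ⟨hu, hv, huv, hadj⟩
    refine ⟨hu, hv, mate M u, (hbip.2 (hM.adj_mate u)).1 hu, hM.mk_mate_mem u, hadj, fun h => ?_⟩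
    exact huv ((hM.eq_mate h).trans (hM.mate_involutive u)).symm

end Matching

section Robust

variable {G H : SimpleGraph V} {U W : Set V} {M : Set (Sym2 V)} {u : V}

theorem transGen_auxArc_of_hasPM_deleteEdges [Finite V] (hbip : IsBipartitionOf H U W)
    (hM : IsPMSet H M) (hu : u ∈ U) (h : HasPM (H.deleteEdges {s(u, mate M u)})) :
    TransGen (auxArc H M U W) u u := by
  obtain ⟨n, hn, hadj⟩ := hasPM_iff_exists_involutive.1 h
  simp only [SimpleGraph.deleteEdges_adj, Set.mem_singleton_iff] at hadj
  -- both `mate M` and `n` swap the sides, so `σ` preserves `U`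
  let σ : Perm V := hn.toPerm * hM.mate_involutive.toPerm
  have hσ : ∀ v, σ v = n (mate M v) := fun _ => rfl
  refine transGen_self_of_perm σ (fun v hv => ?_) hu fun hfix => (hadj (mate M u)).2 ?_
  · have hσU : σ v ∈ U := by
      rw [hσ, iff_not_comm.1 (hbip.mem_iff_notMem_of_adj (hadj _).1), hM.mate_mem_iff hbip,
        not_not]
      exact hv
    refine ⟨hσU, or_iff_not_imp_left.2 fun hne => ?_⟩
    exact (auxArc_iff hbip hM).2 ⟨hv, hσU, Ne.symm hne, (hadj _).1⟩
  · rw [← hσ, hfix, Sym2.eq_swap]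

theorem hasPM_deleteEdges_of_transGen_auxArc [Finite V]
    (hbip : IsBipartitionOf H U W) (hM : IsPMSet H M) (hu : u ∈ U)
    (h : TransGen (auxArc H M U W) u u) : HasPM (H.deleteEdges {s(u, mate M u)}) := by
  obtain ⟨g, hg, hgu⟩ := exists_perm_of_transGen_self (fun _ => auxArc_irrefl) h
  have hgU : ∀ v ∈ U, g v ∈ U := fun v hv => (hg v).elim (fun h => by rwa [h]) (·.2.1)
  have hfix : ∀ v ∉ U, g v = v := fun v hv => (hg v).resolve_right fun h => hv h.1
  have hedge : ∀ x ∈ U, (H.deleteEdges {s(u, mate M u)}).Adj (g x) (mate M x) := by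
    intro x hx
    rw [SimpleGraph.deleteEdges_adj, Set.mem_singleton_iff]
    refine ⟨(hg x).elim (fun h => by rw [h]; exact hM.adj_mate x) fun h => ?_, fun heq => ?_⟩
    · exact ((auxArc_iff hbip hM).1 h).2.2.2.symm
    rcases Sym2.eq_iff.1 heq with ⟨hxu, hmate⟩ | ⟨hxu, -⟩
    · rw [hM.mate_involutive.injective hmate] at hxu
      exact hgu hxu
    · exact (hM.mate_mem_iff hbip).1 (hxu ▸ hgU x hx) hu
  -- the new perfect matching is `M` transported along `g`
  refine hasPM_iff_exists_involutive.2 ⟨fun v => g (mate M (g.symm v)), fun v => ?_, fun v => ?_⟩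
  · simp only [Equiv.symm_apply_apply, hM.mate_involutive _, Equiv.apply_symm_apply]
  obtain ⟨x, rfl⟩ := g.surjective v
  simp only [Equiv.symm_apply_apply]
  by_cases hx : x ∈ U
  · rw [hfix _ ((hM.mate_mem_iff hbip).not.2 (not_not.2 hx))]
    exact hedge x hx
  · have := hedge (mate M x) ((hM.mate_mem_iff hbip).2 hx)
    rw [hM.mate_involutive x] at this
    rw [hfix x hx]
    exact this.symm

theorem robust_iff_forall_transGen_auxArc [Finite V]
    (hbip : IsBipartitionOf H U W) (hM : IsPMSet H M) :
    Robust H ↔ ∀ u ∈ U, TransGen (auxArc H M U W) u u := by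
  refine ⟨fun h u hu => transGen_auxArc_of_hasPM_deleteEdges hbip hM hu
    (h _ (hM.adj_mate u)), fun h e _ => ?_⟩
  by_cases heM : e ∈ M
  · obtain ⟨u, hu, rfl⟩ := hM.exists_eq_mk_mate hbip heM
    exact hasPM_deleteEdges_of_transGen_auxArc hbip hM hu (h u hu)
  · refine hasPM_iff_exists_involutive.2 ⟨mate M, hM.mate_involutive, fun v => ?_⟩
    rw [SimpleGraph.deleteEdges_adj, Set.mem_singleton_iff]
    exact ⟨hM.adj_mate v, fun h => heM (h ▸ hM.mk_mate_mem v)⟩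

theorem Robust.of_reflTransGen_auxArc [Finite V]
    (hbipG : IsBipartitionOf G U W) (hMG : IsPMSet G M)
    (hbipH : IsBipartitionOf H U W) (hMH : IsPMSet H M)
    (h : ∀ a b, auxArc G M U W a b → ReflTransGen (auxArc H M U W) a b) (hG : Robust G) :
    Robust H := by
  rw [robust_iff_forall_transGen_auxArc hbipG hMG] at hG
  rw [robust_iff_forall_transGen_auxArc hbipH hMH]
  refine fun u hu => TransGen.closed (fun a b hab => ?_) _ _ (hG u hu)
  rcases reflTransGen_iff_eq_or_transGen.1 (h a b hab) with rfl | htrans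
  · exact absurd hab auxArc_irrefl
  · exact htrans

theorem Robust.sup_fromEdgeSet_of_reflTransGen [Finite V]
    (hbip : IsBipartitionOf G U W) (hM : IsPMSet G M) {L L' : Set (Sym2 V)}
    (hL' : ∀ e ∈ L', ∃ u ∈ U, ∃ w ∈ W, e = s(u, w))
    (hreach : ∀ e ∈ L, ∃ u ∈ U, ∃ w ∈ W, e = s(u, w) ∧
      ReflTransGen (auxArc (G ⊔ SimpleGraph.fromEdgeSet L') M U W) (mate M w) u)
    (hrob : Robust (G ⊔ SimpleGraph.fromEdgeSet L)) :
    Robust (G ⊔ SimpleGraph.fromEdgeSet L') := by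
  have hbipL := hbip.sup_fromEdgeSet fun e he =>
    let ⟨u, hu, w, hw, heq, _⟩ := hreach e he; ⟨u, hu, w, hw, heq⟩
  refine hrob.of_reflTransGen_auxArc hbipL (hM.mono le_sup_left) (hbip.sup_fromEdgeSet hL')
    (hM.mono le_sup_left) fun a b hab => ?_
  obtain ⟨ha, hb, hab, hadj | ⟨hmem, -⟩⟩ := (auxArc_iff hbipL (hM.mono le_sup_left)).1 hab
  · exact .single (auxArc_mono le_sup_left ((auxArc_iff hbip hM).2 ⟨ha, hb, hab, hadj⟩))
  obtain ⟨u, hu, w, -, heq, hwu⟩ := hreach _ hmem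
  rcases Sym2.eq_iff.1 heq with ⟨hau, -⟩ | ⟨haw, rfl⟩
  · exact absurd ha ((hM.mate_mem_iff hbip).1 (by rwa [hau]))
  · rwa [← haw, hM.mate_involutive] at hwu

end Robust

section Links

variable {G : SimpleGraph V} {U W : Set V} {M : Set (Sym2 V)} {a b : V}

theorem IsNonEdge.exists_eq_mk {e : Sym2 V} (h : IsNonEdge G U W e) :
    ∃ u ∈ U, ∃ w ∈ W, e = s(u, w) :=
  let ⟨u, hu, w, hw, heq, _⟩ := h
  ⟨u, hu, w, hw, heq⟩

theorem IsNonEdge.not_adj {x y : V} (h : IsNonEdge G U W s(x, y)) : ¬ G.Adj x y := by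
  obtain ⟨u, -, w, -, heq, hnadj⟩ := h
  rwa [← SimpleGraph.mem_edgeSet, heq]

theorem isNonEdge_mk_mate_of_not_reflTransGen (hbip : IsBipartitionOf G U W)
    (hM : IsPMSet G M) (ha : a ∈ U) (hb : b ∈ U) (h : ¬ ReflTransGen (auxArc G M U W) a b) :
    IsNonEdge G U W s(b, mate M a) := by
  refine ⟨b, hb, mate M a, (hbip.2 (hM.adj_mate a)).1 ha, rfl, fun hadj => h ?_⟩
  by_cases hab : a = b
  · exact hab ▸ .refl
  · exact .single ((auxArc_iff hbip hM).2 ⟨ha, hb, hab, hadj.symm⟩)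

theorem auxArc_sup_fromEdgeSet_of_mem (hbip : IsBipartitionOf G U W) (hM : IsPMSet G M)
    {L : Set (Sym2 V)} (hL : ∀ e ∈ L, IsNonEdge G U W e) (ha : a ∈ U) (hb : b ∈ U)
    (h : s(b, mate M a) ∈ L) : auxArc (G ⊔ SimpleGraph.fromEdgeSet L) M U W a b := by
  have hmate : mate M a ≠ b := fun h => (hM.mate_mem_iff hbip).1 (h ▸ hb) ha
  refine (auxArc_iff (hbip.sup_fromEdgeSet fun e he => (hL e he).exists_eq_mk)
    (hM.mono le_sup_left)).2
    ⟨ha, hb, ?_, .inr ((SimpleGraph.fromEdgeSet_adj _).2 ⟨by rwa [Sym2.eq_swap], hmate⟩)⟩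
  rintro rfl
  exact (hL _ h).not_adj (hM.adj_mate a)

end Links

section SinkSourceLinks

variable [DecidableEq V] {G : SimpleGraph V} {U W : Set V} {M : Set (Sym2 V)}
  {L : Finset (Sym2 V)} {snk src : Sym2 V → V}

open Classical in
/-- The link `s(src e, mate M (snk e))` adds the arc `snk e → src e` to `D(G, M)`. -/
noncomputable def sinkSourceLinks (G : SimpleGraph V) (M : Set (Sym2 V)) (U W : Set V)
    (L : Finset (Sym2 V)) (snk src : Sym2 V → V) : Finset (Sym2 V) :=
  (L.filter fun e => ¬ ReflTransGen (auxArc G M U W) (snk e) (src e)).image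
    fun e => s(src e, mate M (snk e))

theorem card_sinkSourceLinks_le : (sinkSourceLinks G M U W L snk src).card ≤ L.card := by
  classical
  exact Finset.card_image_le.trans (Finset.card_filter_le _ _)

theorem mem_sinkSourceLinks {e' : Sym2 V} :
    e' ∈ sinkSourceLinks G M U W L snk src ↔
      ∃ e ∈ L, ¬ ReflTransGen (auxArc G M U W) (snk e) (src e) ∧ s(src e, mate M (snk e)) = e' := by
  simp only [sinkSourceLinks, Finset.mem_image, Finset.mem_filter, and_assoc]

theorem isNonEdge_of_mem_sinkSourceLinks (hbip : IsBipartitionOf G U W) (hM : IsPMSet G M)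
    (hsnk : ∀ e ∈ L, snk e ∈ U) (hsrc : ∀ e ∈ L, src e ∈ U) :
    ∀ e' ∈ sinkSourceLinks G M U W L snk src, IsNonEdge G U W e' := by
  intro _ h
  obtain ⟨e, he, hreach, rfl⟩ := mem_sinkSourceLinks.1 h
  exact isNonEdge_mk_mate_of_not_reflTransGen hbip hM (hsnk e he) (hsrc e he) hreach

theorem reflTransGen_auxArc_sup_sinkSourceLinks (hbip : IsBipartitionOf G U W)
    (hM : IsPMSet G M) (hsnk : ∀ e ∈ L, snk e ∈ U) (hsrc : ∀ e ∈ L, src e ∈ U) {e : Sym2 V}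
    (he : e ∈ L) :
    ReflTransGen (auxArc (G ⊔ SimpleGraph.fromEdgeSet ↑(sinkSourceLinks G M U W L snk src)) M U W)
      (snk e) (src e) := by
  by_cases h : ReflTransGen (auxArc G M U W) (snk e) (src e)
  · exact reflTransGen_auxArc_mono le_sup_left h
  · exact .single (auxArc_sup_fromEdgeSet_of_mem hbip hM
      (isNonEdge_of_mem_sinkSourceLinks hbip hM hsnk hsrc) (hsnk e he) (hsrc e he)
      (mem_sinkSourceLinks.2 ⟨e, he, h, rfl⟩))

end SinkSourceLinks

/-- If some set `L` of non-edges makes `G` robust, then there is a set `L'` of non-edges,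
no larger than `L`, making `G` robust, each of whose edges corresponds to an arc from a
sink component to a source component of the condensation of `D(G, M)`. -/
theorem augmentation_from_sinks_to_sources
    {V : Type*} [Fintype V] [DecidableEq V] (G : SimpleGraph V) (U W : Set V)
    (hbip : IsBipartitionOf G U W) (M : Set (Sym2 V)) (hM : IsPMSet G M)
    (L : Finset (Sym2 V)) (hL : ∀ e ∈ L, IsNonEdge G U W e)
    (hrob : Robust (G ⊔ SimpleGraph.fromEdgeSet ↑L)) :
    ∃ L' : Finset (Sym2 V), L'.card ≤ L.card ∧ (∀ e ∈ L', IsNonEdge G U W e) ∧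
      Robust (G ⊔ SimpleGraph.fromEdgeSet ↑L') ∧
      ∀ e ∈ L', ∃ w ∈ W, ∃ u' ∈ U, ∃ u : V, e = s(u', w) ∧ s(u, w) ∈ M ∧
        InSinkComp (auxArc G M U W) u ∧ InSourceComp (auxArc G M U W) u' := by
  rcases isEmpty_or_nonempty V with _ | _
  · exact ⟨L, le_rfl, hL, hrob, fun e => isEmptyElim e⟩
  choose sink hsink_reach hsink using exists_reflTransGen_inSinkComp (auxArc G M U W)
  choose source hsource_reach hsource using exists_reflTransGen_inSourceComp (auxArc G M U W)
  choose! u hu w hw huw _ using hL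
  set snk := fun e => sink (mate M (w e))
  set src := fun e => source (u e)
  have hsnkU : ∀ e ∈ L, snk e ∈ U := fun e he => (mem_iff_of_reflTransGen_auxArc
    (hsink_reach _)).1 ((hM.mate_mem_iff hbip).2 ((hbip.1 _).not_left.2 (hw e he)))
  have hsrcU : ∀ e ∈ L, src e ∈ U := fun e he =>
    (mem_iff_of_reflTransGen_auxArc (hsource_reach _)).2 (hu e he)
  have hL' := isNonEdge_of_mem_sinkSourceLinks hbip hM hsnkU hsrcU
  refine ⟨sinkSourceLinks G M U W L snk src, card_sinkSourceLinks_le, hL', ?_, fun _ h => ?_⟩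
  · refine hrob.sup_fromEdgeSet_of_reflTransGen hbip hM (fun e he => (hL' e he).exists_eq_mk)
      fun e he => ⟨u e, hu e he, w e, hw e he, huw e he, ?_⟩
    exact ((reflTransGen_auxArc_mono le_sup_left (hsink_reach _)).trans
      (reflTransGen_auxArc_sup_sinkSourceLinks hbip hM hsnkU hsrcU he)).trans
      (reflTransGen_auxArc_mono le_sup_left (hsource_reach _))
  · obtain ⟨e, he, -, rfl⟩ := mem_sinkSourceLinks.1 h
    exact ⟨mate M (snk e), (hbip.2 (hM.adj_mate _)).1 (hsnkU e he), src e, hsrcU e he,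
      snk e, rfl, hM.mk_mate_mem _, hsink _, hsource _⟩
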